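/- Let d ≥ 2, let f₀ ∈ ℂ, and for 1 ≤ i ≤ d let fᵢ ∈ ℂ[z₁,z₂,z₃] be homogeneous of degree i; set f = f₀·z₀^d + Σ_{i=1}^{d} z₀^{d−i} fᵢ ∈ ℂ[z₀,z₁,z₂,z₃] and F = Σ_{i=1}^{d} fᵢ ∈ ℂ[z₁,z₂,z₃]. Assume (i) there is no nonzero a ∈ ℂ³ with f_{d−1}(a) = 0, f_d(a) = 0, and all partial derivatives of f_d vanishing at a (so {f = 0} is smooth along {z₀ = 0}), and (ii) −f₀ is not a critical value of F, i.e. for every a ∈ ℂ³ with F(a) = −f₀ some partial derivative ∂F/∂z_j(a) is nonzero. Then the hypersurface X = {f = 0} ⊂ ℙ³ is smooth: for every nonzero p ∈ ℂ⁴ with f(p) = 0, some partial derivative of f is nonzero at p. -/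

import Mathlib

open MvPolynomial

lemma aux_eval_smul {σ : Type*} {φ : MvPolynomial σ ℂ} {n : ℕ}
    (h : φ.IsHomogeneous n) (c : ℂ) (x : σ → ℂ) :
    eval (c • x) φ = c ^ n * eval x φ := by
  rw [eval_eq, eval_eq, Finset.mul_sum]
  refine Finset.sum_congr rfl fun e he => ?_
  have hdeg : (Finsupp.weight 1) e = n := h (mem_support_iff.mp he)
  have : ∏ i ∈ e.support, (c • x) i ^ e i
      = (∏ i ∈ e.support, c ^ e i) * ∏ i ∈ e.support, x i ^ e i := by
    rw [← Finset.prod_mul_distrib]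
    exact Finset.prod_congr rfl fun i _ => by simp [mul_pow]
  rw [this, Finset.prod_pow_eq_pow_sum]
  have hsum : ∑ i ∈ e.support, e i = n := by
    rw [← hdeg, Finsupp.weight_apply, Finsupp.sum]
    simp
  rw [hsum]; ring

lemma aux_pderiv_hom {σ : Type*} [DecidableEq σ] {φ : MvPolynomial σ ℂ} {n : ℕ}
    (h : φ.IsHomogeneous n) (j : σ) : (pderiv j φ).IsHomogeneous (n - 1) := by
  rw [φ.as_sum, map_sum]
  apply IsHomogeneous.sum
  intro e he
  rw [pderiv_monomial]
  by_cases hj : e j = 0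
  · simp [hj, isHomogeneous_zero]
  · apply isHomogeneous_monomial
    have hle : Finsupp.single j 1 ≤ e := by
      rwa [Finsupp.single_le_iff, Nat.one_le_iff_ne_zero]
    have hdeg : (Finsupp.weight (1 : σ → ℕ)) e = n := h (mem_support_iff.mp he)
    have h2 : (Finsupp.weight (1 : σ → ℕ)) (e - Finsupp.single j 1) + 1 = n := by
      have := tsub_add_cancel_of_le hle
      calc (Finsupp.weight (1 : σ → ℕ)) (e - Finsupp.single j 1) + 1
          = (Finsupp.weight (1 : σ → ℕ)) (e - Finsupp.single j 1)
            + (Finsupp.weight (1 : σ → ℕ)) (Finsupp.single j 1) := by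
              simp [Finsupp.weight_apply, Finsupp.sum_single_index]
        _ = (Finsupp.weight (1 : σ → ℕ)) e := by rw [← map_add, this]
        _ = n := hdeg
    rw [Finsupp.degree_eq_weight_one]
    simp only [Pi.one_def] at h2
    omega

/-- Let `f = f₀·z₀^d + Σ_{i=1}^{d} z₀^{d−i} fᵢ` with `fᵢ` homogeneous of degree `i` in
`z₁,z₂,z₃`. If `{f = 0}` is smooth along `{z₀ = 0}` (i.e. `f_{d−1}⁻¹(0) ∩ Sing f_d⁻¹(0) = ∅`)
and `−f₀` is not a critical value of `F = Σ_{i=1}^{d} fᵢ`, then the hypersurface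
`X = {f = 0} ⊂ ℙ³` is smooth. -/
theorem stmt2 (d : ℕ) (hd : 2 ≤ d) (f₀ : ℂ) (F : ℕ → MvPolynomial (Fin 3) ℂ)
    (hF : ∀ i, 1 ≤ i → i ≤ d → (F i).IsHomogeneous i)
    (f : MvPolynomial (Fin 4) ℂ)
    (hf : f = C f₀ * (X 0) ^ d +
      ∑ i ∈ Finset.Icc 1 d, (X 0) ^ (d - i) * rename Fin.succ (F i))
    (hsm : ¬ ∃ a : Fin 3 → ℂ, a ≠ 0 ∧ eval a (F (d - 1)) = 0 ∧ eval a (F d) = 0 ∧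
      ∀ j : Fin 3, eval a (pderiv j (F d)) = 0)
    (hcrit : ∀ a : Fin 3 → ℂ, eval a (∑ i ∈ Finset.Icc 1 d, F i) = -f₀ →
      ∃ j : Fin 3, eval a (pderiv j (∑ i ∈ Finset.Icc 1 d, F i)) ≠ 0) :
    ∀ p : Fin 4 → ℂ, p ≠ 0 → eval p f = 0 → ∃ j : Fin 4, eval p (pderiv j f) ≠ 0 := by
  intro p hp hfp
  set p0 : ℂ := p 0 with hp0def
  set a : Fin 3 → ℂ := p ∘ Fin.succ with hadef
  have hrename0 : ∀ q : MvPolynomial (Fin 3) ℂ,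
      pderiv (0 : Fin 4) (rename Fin.succ q) = 0 := by
    intro q
    apply pderiv_eq_zero_of_notMem_vars
    intro hmem
    obtain ⟨x, -, hx⟩ := Finset.mem_image.mp (vars_rename Fin.succ q hmem)
    exact Fin.succ_ne_zero x hx
  have heval : eval p f
      = f₀ * p0 ^ d + ∑ i ∈ Finset.Icc 1 d, p0 ^ (d - i) * eval a (F i) := by
    simp [hf, eval_rename, hadef, hp0def]
  have hpd0 : eval p (pderiv 0 f)
      = f₀ * ((d : ℂ) * p0 ^ (d - 1))
        + ∑ i ∈ Finset.Icc 1 d, ((d - i : ℕ) : ℂ) * p0 ^ (d - i - 1) * eval a (F i) := by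
    rw [hf]
    rw [map_add, map_sum]
    rw [pderiv_C_mul, pderiv_pow, pderiv_X_self]
    have : ∀ i ∈ Finset.Icc 1 d,
        pderiv (0 : Fin 4) (X 0 ^ (d - i) * rename Fin.succ (F i))
        = ((d - i : ℕ) : MvPolynomial (Fin 4) ℂ) * X 0 ^ (d - i - 1) * rename Fin.succ (F i) := by
      intro i _
      rw [pderiv_mul, hrename0, pderiv_pow, pderiv_X_self]
      ring
    rw [Finset.sum_congr rfl this]
    simp only [eval_add, eval_mul, eval_sum, eval_C, eval_pow, eval_X, map_natCast, map_one,
      eval_rename, hadef]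
    rw [hp0def]
    ring_nf
  have hpds : ∀ k : Fin 3, eval p (pderiv k.succ f)
      = ∑ i ∈ Finset.Icc 1 d, p0 ^ (d - i) * eval a (pderiv k (F i)) := by
    intro k
    rw [hf, map_add, map_sum]
    rw [pderiv_C_mul, pderiv_pow, pderiv_X_of_ne (Fin.succ_ne_zero k).symm]
    have : ∀ i ∈ Finset.Icc 1 d,
        pderiv k.succ (X 0 ^ (d - i) * rename Fin.succ (F i))
        = X 0 ^ (d - i) * rename Fin.succ (pderiv k (F i)) := by
      intro i _
      rw [pderiv_mul, pderiv_pow, pderiv_X_of_ne (Fin.succ_ne_zero k).symm,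
        pderiv_rename (Fin.succ_injective 3)]
      ring
    rw [Finset.sum_congr rfl this]
    simp [eval_rename, hadef, hp0def]
  by_cases h0 : p0 = 0
  · -- point on the hyperplane z₀ = 0
    have hFd : eval a (F d) = 0 := by
      rw [heval, h0] at hfp
      rw [Finset.sum_eq_single_of_mem d (Finset.mem_Icc.mpr ⟨by omega, le_rfl⟩)
        (fun i hi hne => by
          rw [zero_pow (by have := Finset.mem_Icc.mp hi; omega)]; ring)] at hfp
      simpa [zero_pow (by omega : d ≠ 0)] using hfp
    by_contra hcon
    push_neg at hcon
    have hFd1 : eval a (F (d - 1)) = 0 := by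
      have h1 := hcon 0
      rw [hpd0, h0] at h1
      rw [Finset.sum_eq_single_of_mem (d - 1) (Finset.mem_Icc.mpr ⟨by omega, by omega⟩)
        (fun i hi hne => by
          have hi' := Finset.mem_Icc.mp hi
          rcases eq_or_ne i d with rfl | hne2
          · simp
          · rw [zero_pow (by omega : d - i - 1 ≠ 0)]; ring)] at h1
      have hd1 : d - (d - 1) = 1 := by omega
      rw [hd1] at h1
      simpa [zero_pow (by omega : d - 1 ≠ 0)] using h1
    have hpdk : ∀ k : Fin 3, eval a (pderiv k (F d)) = 0 := by
      intro k
      have h1 := hcon k.succ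
      rw [hpds k, h0] at h1
      rwa [Finset.sum_eq_single_of_mem d (Finset.mem_Icc.mpr ⟨by omega, le_rfl⟩)
        (fun i hi hne => by
          rw [zero_pow (by have := Finset.mem_Icc.mp hi; omega)]; ring),
        Nat.sub_self, pow_zero, one_mul] at h1
    have ha0 : a ≠ 0 := by
      intro h
      apply hp
      funext j
      refine Fin.cases ?_ (fun k => ?_) j
      · exact h0
      · exact congrFun h k
    exact hsm ⟨a, ha0, hFd1, hFd, hpdk⟩
  · -- affine chart z₀ ≠ 0
    set b : Fin 3 → ℂ := p0⁻¹ • a with hbdef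
    have hab : a = p0 • b := (smul_inv_smul₀ h0 a).symm
    have hFb : eval b (∑ i ∈ Finset.Icc 1 d, F i) = -f₀ := by
      rw [heval] at hfp
      have hterm : ∀ i ∈ Finset.Icc 1 d,
          p0 ^ (d - i) * eval a (F i) = p0 ^ d * eval b (F i) := by
        intro i hi
        obtain ⟨hi1, hi2⟩ := Finset.mem_Icc.mp hi
        rw [hab, aux_eval_smul (hF i hi1 hi2), ← mul_assoc, ← pow_add,
          Nat.sub_add_cancel hi2]
      rw [Finset.sum_congr rfl hterm, ← Finset.mul_sum] at hfp
      have hsum : eval b (∑ i ∈ Finset.Icc 1 d, F i)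
          = ∑ i ∈ Finset.Icc 1 d, eval b (F i) := map_sum _ _ _
      have hpd : (p0 : ℂ) ^ d ≠ 0 := pow_ne_zero _ h0
      have : p0 ^ d * (f₀ + ∑ i ∈ Finset.Icc 1 d, eval b (F i)) = 0 := by
        rw [mul_add]; linear_combination hfp
      rcases mul_eq_zero.mp this with h | h
      · exact absurd h hpd
      · rw [hsum]; linear_combination h
    obtain ⟨j, hj⟩ := hcrit b hFb
    refine ⟨j.succ, ?_⟩
    rw [hpds j]
    have hterm : ∀ i ∈ Finset.Icc 1 d,
        p0 ^ (d - i) * eval a (pderiv j (F i))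
        = p0 ^ (d - 1) * eval b (pderiv j (F i)) := by
      intro i hi
      obtain ⟨hi1, hi2⟩ := Finset.mem_Icc.mp hi
      rw [hab, aux_eval_smul (aux_pderiv_hom (hF i hi1 hi2) j), ← mul_assoc, ← pow_add]
      congr 2
      omega
    rw [Finset.sum_congr rfl hterm, ← Finset.mul_sum]
    have hsum : eval b (pderiv j (∑ i ∈ Finset.Icc 1 d, F i))
        = ∑ i ∈ Finset.Icc 1 d, eval b (pderiv j (F i)) := by
      rw [map_sum, map_sum]
    rw [← hsum]
    exact mul_ne_zero (pow_ne_zero _ h0) hj
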